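/- The adjustment-formula ATE is determined by the joint law of the observed data: if (X, T, Y) on (Ω, F, P) and (X', T', Y') on (Ω', F', P') are two triples of covariates, binary treatment, and integrable outcome such that the pushforward laws of (X, T, Y) under P and of (X', T', Y') under P' coincide as measures on ℝ^d × {0,1} × ℝ, and both satisfy positivity given their covariates, then A(X,T,Y) = A(X',T',Y'). -/

import Mathlib

/-! Conditional expectation given `σ(X)` of a function `f (X, T, Y)` is, almost surely, the
conditional expectation of `f` given the first coordinate under the law of `(X, T, Y)`, evaluated
at `(X, T, Y)`. So the adjustment formula of `(X, T, Y)` equals the adjustment formula of the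
coordinate projections under the law of `(X, T, Y)`, and the latter is a function of that law. -/

open MeasureTheory ProbabilityTheory

noncomputable section

/-- The real-valued indicator of the event `T = t` for a binary treatment `T`. -/
def indicT {Ω : Type*} (T : Ω → Bool) (t : Bool) : Ω → ℝ :=
  fun ω => if T ω = t then 1 else 0

/-- The adjustment-formula ATE of a triple (covariates `X`, binary treatment `T`, outcome `Y`):
`E[ E[Y·1{T=1} | σ(X)] / E[1{T=1} | σ(X)] − E[Y·1{T=0} | σ(X)] / E[1{T=0} | σ(X)] ]`. -/
def adjATE {Ω β : Type*} [MeasurableSpace Ω] [MeasurableSpace β]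
    (μ : Measure Ω) (X : Ω → β) (T : Ω → Bool) (Y : Ω → ℝ) : ℝ :=
  ∫ ω,
    ((μ[fun ω' => Y ω' * indicT T true ω' | MeasurableSpace.comap X inferInstance]) ω
        / (μ[indicT T true | MeasurableSpace.comap X inferInstance]) ω
      - (μ[fun ω' => Y ω' * indicT T false ω' | MeasurableSpace.comap X inferInstance]) ω
        / (μ[indicT T false | MeasurableSpace.comap X inferInstance]) ω) ∂μ

/-- Positivity given `X`: `0 < E[1{T=1} | σ(X)] < 1` almost surely. -/
def PositivityGiven {Ω β : Type*} [MeasurableSpace Ω] [MeasurableSpace β]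
    (μ : Measure Ω) (X : Ω → β) (T : Ω → Bool) : Prop :=
  ∀ᵐ ω ∂μ, 0 < (μ[indicT T true | MeasurableSpace.comap X inferInstance]) ω ∧
    (μ[indicT T true | MeasurableSpace.comap X inferInstance]) ω < 1

end

theorem condExp_map_comp_ae_eq {Ω E β F : Type*} [MeasurableSpace Ω] [MeasurableSpace E]
    [MeasurableSpace β] [NormedAddCommGroup F] [NormedSpace ℝ F] [CompleteSpace F]
    {μ : Measure Ω} [IsFiniteMeasure μ] {φ : Ω → E} (hφ : AEMeasurable φ μ)
    {X : E → β} (hX : Measurable X) {Z : Ω → β} (hZ : Measurable Z) (hXφ : X ∘ φ = Z)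
    {f : E → F} (hf : Integrable f (μ.map φ)) :
    (fun ω => ((μ.map φ)[f | MeasurableSpace.comap X inferInstance]) (φ ω)) =ᵐ[μ]
      μ[f ∘ φ | MeasurableSpace.comap Z inferInstance] := by
  have hmX := hX.comap_le
  have hcomap : (MeasurableSpace.comap X inferInstance).comap φ
      = MeasurableSpace.comap Z inferInstance := by
    rw [MeasurableSpace.comap_comp, hXφ]
  set g := (μ.map φ)[f | MeasurableSpace.comap X inferInstance]
  have hg : StronglyMeasurable[MeasurableSpace.comap X inferInstance] g :=
    stronglyMeasurable_condExp
  have hg' : AEStronglyMeasurable g (μ.map φ) := (hg.mono hmX).aestronglyMeasurable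
  have hφZ : Measurable[MeasurableSpace.comap Z inferInstance,
      MeasurableSpace.comap X inferInstance] φ := by
    rw [measurable_iff_comap_le, hcomap]
  refine ae_eq_condExp_of_forall_setIntegral_eq hZ.comap_le
    ((integrable_map_measure hf.1 hφ).mp hf)
    (fun s _ _ => ((integrable_map_measure hg' hφ).mp integrable_condExp).integrableOn) ?_
    (hg.comp_measurable hφZ).aestronglyMeasurable
  rintro _ ⟨A, hA, rfl⟩ -
  rw [← hXφ, Set.preimage_comp, Function.comp_def f, ← setIntegral_map (hX hA) hg' hφ,
    ← setIntegral_map (hX hA) hf.1 hφ]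
  exact setIntegral_condExp hmX hf ⟨A, hA, rfl⟩

theorem indicT_eq_indicator {Ω : Type*} (T : Ω → Bool) (t : Bool) :
    indicT T t = {ω | T ω = t}.indicator 1 := by
  ext ω
  simp [indicT, Set.indicator]

theorem mul_indicT_eq_indicator {Ω : Type*} (Y : Ω → ℝ) (T : Ω → Bool) (t : Bool) :
    (fun ω => Y ω * indicT T t ω) = {ω | T ω = t}.indicator Y := by
  ext ω
  simp [indicT, Set.indicator]

theorem measurable_indicT {Ω : Type*} [MeasurableSpace Ω] {T : Ω → Bool} (hT : Measurable T)
    (t : Bool) : Measurable (indicT T t) := by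
  rw [indicT_eq_indicator]
  exact measurable_one.indicator (hT (measurableSet_singleton t))

theorem integrable_indicT {Ω : Type*} [MeasurableSpace Ω] {μ : Measure Ω} [IsFiniteMeasure μ]
    {T : Ω → Bool} (hT : Measurable T) (t : Bool) : Integrable (indicT T t) μ := by
  rw [indicT_eq_indicator]
  exact (integrable_const 1).indicator (hT (measurableSet_singleton t))

theorem integrable_mul_indicT {Ω : Type*} [MeasurableSpace Ω] {μ : Measure Ω} {Y : Ω → ℝ}
    (hY : Integrable Y μ) {T : Ω → Bool} (hT : Measurable T) (t : Bool) :
    Integrable (fun ω => Y ω * indicT T t ω) μ := by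
  rw [mul_indicT_eq_indicator]
  exact hY.indicator (hT (measurableSet_singleton t))

theorem adjATE_eq_adjATE_map {Ω β : Type*} [MeasurableSpace Ω] [MeasurableSpace β]
    {μ : Measure Ω} [IsFiniteMeasure μ] {X : Ω → β} {T : Ω → Bool} {Y : Ω → ℝ}
    (hX : Measurable X) (hT : Measurable T) (hY : Integrable Y μ) :
    adjATE μ X T Y = adjATE (μ.map fun ω => (X ω, T ω, Y ω))
      Prod.fst (fun p => p.2.1) (fun p => p.2.2) := by
  set φ : Ω → β × Bool × ℝ := fun ω => (X ω, T ω, Y ω)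
  have hφ : AEMeasurable φ μ :=
    hX.aemeasurable.prodMk (hT.aemeasurable.prodMk hY.1.aemeasurable)
  have pull {f : β × Bool × ℝ → ℝ} (hfm : Measurable f) (hf : Integrable (f ∘ φ) μ) :
      (fun ω => ((μ.map φ)[f | MeasurableSpace.comap Prod.fst inferInstance]) (φ ω)) =ᵐ[μ]
        μ[f ∘ φ | MeasurableSpace.comap X inferInstance] :=
    condExp_map_comp_ae_eq hφ measurable_fst hX rfl
      ((integrable_map_measure hfm.aestronglyMeasurable hφ).mpr hf)
  have hT₀ : Measurable fun p : β × Bool × ℝ => p.2.1 := measurable_fst.comp measurable_snd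
  have h_indicT (t : Bool) :
      (fun ω => ((μ.map φ)[indicT (fun p => p.2.1) t
        | MeasurableSpace.comap Prod.fst inferInstance]) (φ ω)) =ᵐ[μ]
        μ[indicT T t | MeasurableSpace.comap X inferInstance] :=
    pull (measurable_indicT hT₀ t) (integrable_indicT hT t)
  have h_mul_indicT (t : Bool) :
      (fun ω => ((μ.map φ)[fun p => p.2.2 * indicT (fun p => p.2.1) t p
        | MeasurableSpace.comap Prod.fst inferInstance]) (φ ω)) =ᵐ[μ]
        μ[fun ω => Y ω * indicT T t ω | MeasurableSpace.comap X inferInstance] :=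
    pull ((measurable_snd.comp measurable_snd).mul (measurable_indicT hT₀ t))
      (integrable_mul_indicT hY hT t)
  have hm (f : β × Bool × ℝ → ℝ) :
      Measurable ((μ.map φ)[f | MeasurableSpace.comap Prod.fst inferInstance]) :=
    (stronglyMeasurable_condExp.mono measurable_fst.comap_le).measurable
  rw [adjATE, adjATE, integral_map hφ (by fun_prop)]
  refine integral_congr_ae ?_
  filter_upwards [h_mul_indicT true, h_indicT true, h_mul_indicT false, h_indicT false]
    with ω h₁ h₂ h₃ h₄
  rw [h₁, h₂, h₃, h₄]

theorem statement3_general {Ω Ω' : Type*} [MeasurableSpace Ω] [MeasurableSpace Ω'] {d : ℕ}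
    (μ : Measure Ω) (μ' : Measure Ω') [IsProbabilityMeasure μ] [IsProbabilityMeasure μ']
    (X : Ω → Fin d → ℝ) (T : Ω → Bool) (Y : Ω → ℝ)
    (X' : Ω' → Fin d → ℝ) (T' : Ω' → Bool) (Y' : Ω' → ℝ)
    (hX : Measurable X) (hT : Measurable T) (hY : Integrable Y μ)
    (hX' : Measurable X') (hT' : Measurable T') (hY' : Integrable Y' μ')
    (hlaw : Measure.map (fun ω => (X ω, T ω, Y ω)) μ
      = Measure.map (fun ω' => (X' ω', T' ω', Y' ω')) μ') :
    adjATE μ X T Y = adjATE μ' X' T' Y' := by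
  rw [adjATE_eq_adjATE_map hX hT hY, adjATE_eq_adjATE_map hX' hT' hY', hlaw]

/-- The adjustment-formula ATE is determined by the joint law of the observed data:
if the pushforward laws of `(X, T, Y)` and `(X', T', Y')` coincide and both triples satisfy
positivity given their covariates, then their adjustment-formula ATEs coincide. -/
theorem statement3 {Ω Ω' : Type*} [MeasurableSpace Ω] [MeasurableSpace Ω'] {d : ℕ}
    (μ : Measure Ω) (μ' : Measure Ω') [IsProbabilityMeasure μ] [IsProbabilityMeasure μ']
    (X : Ω → Fin d → ℝ) (T : Ω → Bool) (Y : Ω → ℝ)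
    (X' : Ω' → Fin d → ℝ) (T' : Ω' → Bool) (Y' : Ω' → ℝ)
    (hX : Measurable X) (hT : Measurable T) (hY : Integrable Y μ)
    (hX' : Measurable X') (hT' : Measurable T') (hY' : Integrable Y' μ')
    (hpos : PositivityGiven μ X T) (hpos' : PositivityGiven μ' X' T')
    (hlaw : Measure.map (fun ω => (X ω, T ω, Y ω)) μ
      = Measure.map (fun ω' => (X' ω', T' ω', Y' ω')) μ') :
    adjATE μ X T Y = adjATE μ' X' T' Y' :=
  statement3_general μ μ' X T Y X' T' Y' hX hT hY hX' hT' hY' hlaw
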